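/- For d = 2k+1 with k ≥ 1, the modulus squared of the Harish-Chandra c-function satisfies |c(λ,ρ)|² = 4^{2k−1} Γ(k+1/2)² / (π ∏_{l=0}^{k−1}(l² + λ²)) for all real λ ≠ 0, where ρ = k and c(λ,ρ) = 2^{2ρ−1} Γ(iλ) Γ(ρ+1/2) / (√π Γ(ρ+iλ)). -/

import Mathlib

open Complex Real

/-- The Harish-Chandra c-function c(λ,ρ) = 2^{2ρ-1} Γ(iλ) Γ(ρ+1/2) / (√π Γ(ρ+iλ)). -/
noncomputable def harishChandraC (lam ρ : ℝ) : ℂ :=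
  2 ^ (2 * (ρ : ℂ) - 1) * Complex.Gamma (↑lam * Complex.I) * Complex.Gamma (↑ρ + 1 / 2) /
    (↑(Real.sqrt Real.pi) * Complex.Gamma (↑ρ + ↑lam * Complex.I))

/-! The factor `Γ(iλ)` of the numerator cancels against `Γ(k + iλ) = iλ (iλ + 1) ⋯ (iλ + k - 1) Γ(iλ)`,
and `|iλ + l|² = l² + λ²`; the remaining factors `2^{2k-1}`, `Γ(k + 1/2)` and `√π` are real. -/

open Finset

theorem ascPochhammer_eval_eq_prod_range {R : Type*} [CommSemiring R] (n : ℕ) (r : R) :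
    (ascPochhammer R n).eval r = ∏ j ∈ range n, (r + j) := by
  induction n with
  | zero => simp
  | succ n ih => simp [ascPochhammer_succ_right, ih, Finset.prod_range_succ]

namespace Complex

theorem norm_sq_Gamma_mul_I_div_Gamma_nat_add (n : ℕ) {lam : ℝ} (h : lam ≠ 0) :
    ‖Gamma (lam * I) / Gamma (n + lam * I)‖ ^ 2 = (∏ l ∈ range n, ((l : ℝ) ^ 2 + lam ^ 2))⁻¹ := by
  have hz : ∀ m : ℕ, (lam : ℂ) * I ≠ -m := fun m hm => h (by simpa using congrArg im hm)
  rw [add_comm, ← inv_div, Gamma_add_nat_div_Gamma_eq _ hz, ascPochhammer_eval_eq_prod_range,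
    norm_inv, inv_pow, norm_prod, ← prod_pow]
  congr 1
  refine prod_congr rfl fun l _ => ?_
  rw [Complex.sq_norm, normSq_apply]
  simp only [add_re, mul_re, ofReal_re, I_re, mul_zero, ofReal_im, I_im, mul_one, sub_self,
    natCast_re, zero_add, add_im, mul_im, add_zero, natCast_im]
  ring

theorem two_cpow_two_mul_natCast_sub_one {k : ℕ} (hk : 1 ≤ k) :
    (2 : ℂ) ^ (2 * (k : ℂ) - 1) = 2 ^ (2 * k - 1) := by
  rw [← cpow_natCast]
  push_cast [Nat.cast_sub (by omega : 1 ≤ 2 * k)]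
  rfl

end Complex

theorem harishChandraC_odd_dim (k : ℕ) (hk : 1 ≤ k) (lam : ℝ) (h : lam ≠ 0) :
    ‖harishChandraC lam (k : ℝ)‖ ^ 2 =
      4 ^ (2 * k - 1) * Real.Gamma ((k : ℝ) + 1 / 2) ^ 2 /
        (Real.pi * ∏ l ∈ Finset.range k, ((l : ℝ) ^ 2 + lam ^ 2)) := by
  have hc : harishChandraC lam k = 2 ^ (2 * k - 1) * (Real.Gamma (k + 1 / 2) : ℂ) / (√π : ℝ) *
      (Gamma (lam * I) / Gamma (k + lam * I)) := by
    rw [harishChandraC, ofReal_natCast, Complex.two_cpow_two_mul_natCast_sub_one hk,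
      ← Complex.Gamma_ofReal]
    push_cast
    ring
  rw [hc, norm_mul, mul_pow, Complex.norm_sq_Gamma_mul_I_div_Gamma_nat_add k h, norm_div, norm_mul,
    div_pow, mul_pow, norm_real, norm_real, Real.norm_eq_abs, Real.norm_eq_abs, sq_abs, sq_abs,
    Real.sq_sqrt Real.pi_pos.le, norm_pow, Complex.norm_ofNat, ← pow_mul, mul_comm _ 2, pow_mul]
  norm_num
  field_simp
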